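/- Define f̂(x, s) = (sign(2x − 1)(1 − 2s) + 1)/2 and f̃(x, s) = (sign(2x − 1) + 1)/2 for x ∈ [0,1] and s ∈ {0,1}, where sign(t) = 1 if t > 0 and −1 if t ≤ 0. If X is uniformly distributed on [0,1] under both groups s = 0 and s = 1, then: (a) the distribution of f̂(X, 0) equals the distribution of f̂(X, 1), and likewise for f̃; but (b) on the subset A = [1/2, 1], E[f̂(X,0) | X ∈ A] = 1 while E[f̂(X,1) | X ∈ A] = 0, whereas E[f̃(X,0) | X ∈ A] = E[f̃(X,1) | X ∈ A] = 1. -/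

import Mathlib

open MeasureTheory ProbabilityTheory

/-- sign(t) = 1 if t > 0 and −1 if t ≤ 0. -/
noncomputable def sgn (t : ℝ) : ℝ := if 0 < t then 1 else -1

/-- f̂(x, s) = (sign(2x − 1)(1 − 2s) + 1)/2 : the group-flipping classifier. -/
noncomputable def fhat (x s : ℝ) : ℝ := (sgn (2 * x - 1) * (1 - 2 * s) + 1) / 2

/-- f̃(x, s) = (sign(2x − 1) + 1)/2 : the group-independent classifier. -/
noncomputable def ftilde (x s : ℝ) : ℝ := (sgn (2 * x - 1) + 1) / 2

/-!
f̂(·, 0) and f̂(·, 1) are the indicators of (1/2, ∞) and of its complement. An indicator and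
the indicator of the complement have the same law under any measure giving the set and its
complement equal mass, and the uniform law on [0, 1] gives both halves mass 1/2. Conditioned on
A = [1/2, 1], almost surely X > 1/2 (the endpoint is null), where f̂(·, 0) = f̃ = 1 and
f̂(·, 1) = 0.
-/

open Set

section General

variable {α : Type*} [MeasurableSpace α] {μ : Measure α}

theorem map_indicator_const_compl_eq {M : Type*} [MeasurableSpace M] [Zero M] {s : Set α}
    (hs : MeasurableSet s) (hμ : μ s = μ sᶜ) (b : M) :
    μ.map (sᶜ.indicator fun _ => b) = μ.map (s.indicator fun _ => b) := by
  classical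
  ext t ht
  rw [Measure.map_apply (measurable_const.indicator hs.compl) ht,
    Measure.map_apply (measurable_const.indicator hs) ht,
    indicator_const_preimage_eq_union, indicator_const_preimage_eq_union, compl_compl]
  split_ifs <;> simp [hμ, union_comm]

theorem integral_cond_of_ae_eq_const [IsFiniteMeasure μ] {s : Set α} (hs : μ s ≠ 0)
    {f : α → ℝ} {c : ℝ} (hf : ∀ᵐ x ∂μ[|s], f x = c) : ∫ x, f x ∂μ[|s] = c := by
  have := cond_isProbabilityMeasure hs
  rw [integral_congr_ae hf]
  simp

theorem ae_cond_Icc_left_lt [LinearOrder α] [TopologicalSpace α] [OrderClosedTopology α]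
    [OpensMeasurableSpace α] [NullSingletonClass μ] (a b : α) :
    ∀ᵐ x ∂μ[|Icc a b], a < x := by
  have hIoc : ∀ᵐ x ∂μ, x ∈ Icc a b → x ∈ Ioc a b := Ioc_ae_eq_Icc.mem_iff.mono fun _ h => h.2
  filter_upwards [ae_cond_mem measurableSet_Icc, cond_absolutelyContinuous.ae_le hIoc]
    with x hx hIoc using (hIoc hx).1

end General

theorem volume_restrict_Icc_Ioi {a b c : ℝ} (hac : a ≤ c) :
    volume.restrict (Icc a b) (Ioi c) = ENNReal.ofReal (b - c) := by
  have hinter : Ioi c ∩ Icc a b = Ioc c b := by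
    ext x
    simp only [mem_inter_iff, mem_Ioi, mem_Icc, mem_Ioc]
    exact ⟨fun h => ⟨h.1, h.2.2⟩, fun h => ⟨h.1, hac.trans h.1.le, h.2⟩⟩
  rw [Measure.restrict_apply measurableSet_Ioi, hinter, Real.volume_Ioc]

theorem volume_restrict_Icc_Iic {a b c : ℝ} (hcb : c ≤ b) :
    volume.restrict (Icc a b) (Iic c) = ENNReal.ofReal (c - a) := by
  have hinter : Iic c ∩ Icc a b = Icc a c := by
    ext x
    simp only [mem_inter_iff, mem_Iic, mem_Icc]
    exact ⟨fun h => ⟨h.2.1, h.1⟩, fun h => ⟨h.2, h.1, h.2.trans hcb⟩⟩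
  rw [Measure.restrict_apply measurableSet_Iic, hinter, Real.volume_Icc]

theorem fhat_zero_eq_indicator (x : ℝ) :
    fhat x 0 = (Ioi (1 / 2 : ℝ)).indicator (fun _ => 1) x := by
  simp only [fhat, sgn, indicator, mem_Ioi]
  split_ifs <;> linarith

theorem fhat_one_eq_indicator (x : ℝ) :
    fhat x 1 = (Iic (1 / 2 : ℝ)).indicator (fun _ => 1) x := by
  simp only [fhat, sgn, indicator, mem_Iic]
  split_ifs <;> linarith

theorem ftilde_eq_fhat_zero (x s : ℝ) : ftilde x s = fhat x 0 := by
  simp [ftilde, fhat]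

/-- With X uniform on [0,1] in both groups, f̂ and f̃ are perfectly
group-fair (equal score distributions across s = 0, 1), yet on A = [1/2, 1] the
classifier f̂ has conditional means 1 and 0 for the two groups (maximal subset
unfairness), while f̃ has conditional mean 1 for both groups. -/
theorem group_fair_but_subset_unfair_example :
    let μ : Measure ℝ := volume.restrict (Set.Icc (0 : ℝ) 1)
    let A : Set ℝ := Set.Icc (1 / 2 : ℝ) 1
    (μ.map (fun x => fhat x 0) = μ.map (fun x => fhat x 1))
      ∧ (μ.map (fun x => ftilde x 0) = μ.map (fun x => ftilde x 1))
      ∧ (∫ x, fhat x 0 ∂(μ[|A]) = 1) ∧ (∫ x, fhat x 1 ∂(μ[|A]) = 0)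
      ∧ (∫ x, ftilde x 0 ∂(μ[|A]) = 1) ∧ (∫ x, ftilde x 1 ∂(μ[|A]) = 1) := by
  intro μ A
  have halves : μ (Ioi (1 / 2)) = μ (Ioi (1 / 2))ᶜ := by
    rw [compl_Ioi, volume_restrict_Icc_Ioi (by norm_num), volume_restrict_Icc_Iic (by norm_num)]
    norm_num
  have hA : μ A ≠ 0 := by
    rw [Measure.restrict_apply measurableSet_Icc,
      inter_eq_left.2 (Icc_subset_Icc_left (by norm_num))]
    norm_num
  have hgt : ∀ᵐ x ∂μ[|A], 1 / 2 < x := ae_cond_Icc_left_lt _ _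
  have hfhat_zero : ∫ x, fhat x 0 ∂μ[|A] = 1 :=
    integral_cond_of_ae_eq_const hA <| hgt.mono fun x hx => by
      rw [fhat_zero_eq_indicator, indicator_of_mem (mem_Ioi.2 hx)]
  refine ⟨?_, rfl, hfhat_zero, ?_, ?_, ?_⟩
  · simp only [fhat_zero_eq_indicator, fhat_one_eq_indicator, ← compl_Ioi]
    exact (map_indicator_const_compl_eq measurableSet_Ioi halves 1).symm
  · exact integral_cond_of_ae_eq_const hA <| hgt.mono fun x hx => by
      rw [fhat_one_eq_indicator, indicator_of_notMem (notMem_Iic.2 hx)]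
  all_goals simpa only [ftilde_eq_fhat_zero] using hfhat_zero
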